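/- Let A ∈ ℝ^{m×n}, d ∈ ℝ^m, μ > 0 and Σ_h = μI_m. For u = (u^(1),…,u^(N)) ∈ (ℝⁿ)^N define g(u)^(i) = u^(i) + C(u)Aᵀ(Σ_h + AC(u)Aᵀ)⁻¹(d − Au^(i)) and, for α ≥ 1, g_m(u,α)^(i) = u^(i) + α·C(u)Aᵀ(Σ_h + α·AC(u)Aᵀ)⁻¹(d − Au^(i)) (so g_m(·,1) = g). Let (α_k)_{k≥0} be a bounded real sequence with α_k ≥ 1 for all k and α_k → 1, let u₀ ∈ (ℝⁿ)^N, define u_{k+1} = g_m(u_k, α_k), and let D ⊆ ℝⁿ be the linear span of {u₀^(1),…,u₀^(N)}. Assume: (i) for every ensemble w ∈ (ℝⁿ)^N with all members in D, the iteration w_{k+1} = g(w_k) starting at w converges, and all members of its limit are equal; (ii) the sequence (u_k) is bounded in (ℝⁿ)^N; (iii) there exist k₀ ∈ ℕ and L ∈ [0,1) such that, defining v_{k₀} = u_{k₀} and v_{k+1} = g(v_k) for k ≥ k₀, one has ‖g(u_k) − g(v_k)‖₂ ≤ L·‖u_k − v_k‖₂ for all k ≥ k₀. Then: (a) u_k^(i)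 ∈ D for all k and i; (b) the sequence (u_k) converges to a limit u* satisfying u* = g(u*) (a fixed point of the unperturbed EnKI map); and (c) all N ensemble members of u* are equal. -/

import Mathlib

open Matrix Filter

/-- The sample covariance matrix of an ensemble `u = (u^(1),…,u^(N))` of vectors in `ℝⁿ`:
`C(u) = (1/N) ∑ᵢ (u^(i) − ū)(u^(i) − ū)ᵀ`, where `ū = (1/N) ∑ᵢ u^(i)`. -/
noncomputable def sampleCov {n N : ℕ} (u : Fin N → Fin n → ℝ) : Matrix (Fin n) (Fin n) ℝ :=
  (N : ℝ)⁻¹ • ∑ i, vecMulVec (u i - (N : ℝ)⁻¹ • ∑ j, u j) (u i - (N : ℝ)⁻¹ • ∑ j, u j)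

/-- One step of the multiplicatively corrected Ensemble Kalman Inversion (EnKI-MC):
`g_m(u,α)^(i) = u^(i) + α·C(u)Aᵀ(μI + α·AC(u)Aᵀ)⁻¹(d − Au^(i))`; `g_m(·,1)` is the vanilla
EnKI map `g`. -/
noncomputable def enkiStep {m n N : ℕ} (A : Matrix (Fin m) (Fin n) ℝ) (d : Fin m → ℝ)
    (μ : ℝ) (α : ℝ) (u : Fin N → Fin n → ℝ) : Fin N → Fin n → ℝ :=
  fun i => u i +
    (α • (sampleCov u * Aᵀ *
      (μ • (1 : Matrix (Fin m) (Fin m) ℝ) + α • (A * sampleCov u * Aᵀ))⁻¹)) *ᵥ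
        (d - A *ᵥ u i)

/-- The Euclidean norm of an ensemble, viewed as an element of `ℝ^{nN}`. -/
noncomputable def ensNorm {n N : ℕ} (u : Fin N → Fin n → ℝ) : ℝ :=
  Real.sqrt (∑ i, ∑ j, (u i j) ^ 2)

/-!
Each EnKI step moves every member by a vector `C(u)z`, which lies in the span of the deviations
`u^(i) − ū`; hence the iterates never leave `D`. Since `μI + α·AC(u)Aᵀ` is positive definite for
`α ≥ 0`, the map `(α, u) ↦ g_m(u, α)` is continuous there, hence uniformly continuous on the compact
set `[1, sup α] × {‖u‖₂ ≤ R}` containing the iteration, and so `g_m(u_k, α_k) − g(u_k) → 0`.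
Comparing with the vanilla orbit `v_k` of `u_{k₀}`, the gap `δ_k = ‖u_k − v_k‖₂` satisfies
`δ_{k+1} ≤ L δ_k + ε_k` with `ε_k → 0`, so `δ_k → 0` and `u_k` converges to the collapsed limit of
`v_k`. A collapsed ensemble has `C = 0` and is therefore fixed by `g`.
-/

open Topology Uniformity

section SampleCovariance

variable {n N : ℕ}

theorem posSemidef_sampleCov (u : Fin N → Fin n → ℝ) : (sampleCov u).PosSemidef :=
  (posSemidef_sum _ fun i _ => by
    simpa using posSemidef_vecMulVec_self_star (u i - (N : ℝ)⁻¹ • ∑ j, u j)).smul (by positivity)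

theorem sampleCov_mulVec_mem {D : Submodule ℝ (Fin n → ℝ)} {u : Fin N → Fin n → ℝ}
    (hu : ∀ i, u i ∈ D) (z : Fin n → ℝ) : sampleCov u *ᵥ z ∈ D := by
  rw [sampleCov, smul_mulVec, sum_mulVec]
  refine D.smul_mem _ (D.sum_mem fun i _ => ?_)
  rw [vecMulVec_mulVec, op_smul_eq_smul]
  exact D.smul_mem _ (D.sub_mem (hu i) (D.smul_mem _ (D.sum_mem fun j _ => hu j)))

theorem sampleCov_eq_zero_of_forall_eq {u : Fin N → Fin n → ℝ} (h : ∀ i j, u i = u j) :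
    sampleCov u = 0 := by
  refine smul_eq_zero_of_right _ (Finset.sum_eq_zero fun i _ => ?_)
  have hN : (N : ℝ) ≠ 0 := Nat.cast_ne_zero.mpr (Fin.pos i).ne'
  have hmean : (N : ℝ)⁻¹ • ∑ j, u j = u i := by
    simp [Finset.sum_congr rfl fun j _ => h j i, ← Nat.cast_smul_eq_nsmul ℝ, smul_smul, hN]
  simp [hmean]

theorem continuous_sampleCov : Continuous (sampleCov : (Fin N → Fin n → ℝ) → _) := by
  unfold sampleCov
  fun_prop

end SampleCovariance

section EnKIStep

variable {m n N : ℕ} (A : Matrix (Fin m) (Fin n) ℝ) (d : Fin m → ℝ) {μ : ℝ}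

/-- `Σ_h + α·AC(u)Aᵀ`, the matrix inverted in an EnKI-MC step. -/
noncomputable def innovationCov (μ α : ℝ) (u : Fin N → Fin n → ℝ) : Matrix (Fin m) (Fin m) ℝ :=
  μ • 1 + α • (A * sampleCov u * Aᵀ)

theorem posDef_innovationCov {α : ℝ} (hμ : 0 < μ) (hα : 0 ≤ α) (u : Fin N → Fin n → ℝ) :
    (innovationCov A μ α u).PosDef :=
  (PosDef.one.smul hμ).add_posSemidef
    (by simpa using ((posSemidef_sampleCov u).mul_mul_conjTranspose_same A).smul hα)

theorem enkiStep_mem {D : Submodule ℝ (Fin n → ℝ)} (α : ℝ) {u : Fin N → Fin n → ℝ}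
    (hu : ∀ i, u i ∈ D) (i : Fin N) : enkiStep A d μ α u i ∈ D := by
  refine D.add_mem (hu i) ?_
  rw [smul_mulVec, Matrix.mul_assoc, ← mulVec_mulVec]
  exact D.smul_mem _ (sampleCov_mulVec_mem hu _)

theorem mem_span_of_enkiStep_recursion {α : ℕ → ℝ} {u : ℕ → Fin N → Fin n → ℝ}
    (hu : ∀ k, u (k + 1) = enkiStep A d μ (α k) (u k)) (k : ℕ) (i : Fin N) :
    u k i ∈ Submodule.span ℝ (Set.range (u 0)) := by
  induction k generalizing i with
  | zero => exact Submodule.subset_span ⟨i, rfl⟩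
  | succ k ih => exact hu k ▸ enkiStep_mem A d (α k) ih i

theorem enkiStep_eq_self_of_forall_eq (α : ℝ) {u : Fin N → Fin n → ℝ} (h : ∀ i j, u i = u j) :
    enkiStep A d μ α u = u := by
  funext i
  simp [enkiStep, sampleCov_eq_zero_of_forall_eq h]

theorem continuousOn_enkiStep (hμ : 0 < μ) :
    ContinuousOn (fun p : ℝ × (Fin N → Fin n → ℝ) => enkiStep A d μ p.1 p.2)
      (Set.Ici 0 ×ˢ Set.univ) := by
  rintro ⟨α, u⟩ ⟨hα, -⟩
  have hinv : ContinuousAt (fun p : ℝ × (Fin N → Fin n → ℝ) => (innovationCov A μ p.1 p.2)⁻¹)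
      (α, u) := by
    refine (continuousAt_matrix_inv (innovationCov A μ α u) ?_).comp (x := (α, u))
      (f := fun p => innovationCov A μ p.1 p.2) ?_
    · rw [Ring.inverse_eq_inv']
      exact continuousAt_inv₀ (posDef_innovationCov A hμ hα u).det_pos.ne'
    · have := continuous_sampleCov (n := n) (N := N)
      unfold innovationCov
      fun_prop
  have hstep : Continuous fun q : (ℝ × (Fin N → Fin n → ℝ)) × Matrix (Fin m) (Fin m) ℝ =>
      fun i => q.1.2 i + (q.1.1 • (sampleCov q.1.2 * Aᵀ * q.2)) *ᵥ (d - A *ᵥ q.1.2 i) := by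
    have := continuous_sampleCov (n := n) (N := N)
    fun_prop
  refine ContinuousAt.continuousWithinAt ?_
  have hpair : ContinuousAt
      (fun p : ℝ × (Fin N → Fin n → ℝ) => (p, (innovationCov A μ p.1 p.2)⁻¹)) (α, u) :=
    continuousAt_id.prodMk hinv
  exact hstep.continuousAt.comp hpair

end EnKIStep

section EnsembleNorm

variable {n N : ℕ}

noncomputable def ensembleEquiv : (Fin N → Fin n → ℝ) ≃L[ℝ] EuclideanSpace ℝ (Fin N × Fin n) :=
  ((LinearEquiv.curry ℝ ℝ (Fin N) (Fin n)).symm.trans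
    (WithLp.linearEquiv 2 ℝ (Fin N × Fin n → ℝ)).symm).toContinuousLinearEquiv

theorem ensNorm_eq_norm (u : Fin N → Fin n → ℝ) : ensNorm u = ‖ensembleEquiv u‖ := by
  rw [EuclideanSpace.norm_eq, ensNorm, Fintype.sum_prod_type]
  simp [ensembleEquiv]

theorem ensNorm_add_le (u v : Fin N → Fin n → ℝ) : ensNorm (u + v) ≤ ensNorm u + ensNorm v := by
  simpa only [ensNorm_eq_norm, map_add] using norm_add_le _ _

theorem isCompact_setOf_ensNorm_le (R : ℝ) :
    IsCompact {u : Fin N → Fin n → ℝ | ensNorm u ≤ R} := by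
  simpa [Set.preimage, ensNorm_eq_norm] using
    ensembleEquiv.toHomeomorph.isCompact_preimage.2 (isCompact_closedBall 0 R)

theorem tendsto_zero_iff_tendsto_ensNorm {ι : Type*} {l : Filter ι} {f : ι → Fin N → Fin n → ℝ} :
    Tendsto f l (𝓝 0) ↔ Tendsto (fun k => ensNorm (f k)) l (𝓝 0) := by
  simp only [ensNorm_eq_norm, ← tendsto_zero_iff_norm_tendsto_zero]
  rw [← ensembleEquiv.map_zero]
  exact ensembleEquiv.toHomeomorph.isInducing.tendsto_nhds_iff

end EnsembleNorm

theorem tendsto_sub_of_continuousOn_prod {X Y G ι : Type*} [UniformSpace X] [UniformSpace Y]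
    [AddGroup G] [UniformSpace G] [IsUniformAddGroup G] {f : X × Y → G} {s : Set X} {t : Set Y}
    (hs : IsCompact s) (ht : IsCompact t) (hf : ContinuousOn f (s ×ˢ t)) {l : Filter ι}
    {a : ι → X} {x : X} (ha : Tendsto a l (𝓝 x)) (has : ∀ k, a k ∈ s) (hx : x ∈ s)
    {b : ι → Y} (hbt : ∀ k, b k ∈ t) :
    Tendsto (fun k => f (a k, b k) - f (x, b k)) l (𝓝 0) := by
  have hclose : Tendsto (fun k => ((x, b k), (a k, b k))) l (𝓤 (X × Y)) := by
    rw [uniformity_prod]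
    exact tendsto_inf.2 ⟨tendsto_comap_iff.2 ((tendsto_const_nhds.prodMk_nhds ha).mono_right
      (nhds_le_uniformity x)), tendsto_comap_iff.2 (tendsto_diag_uniformity b l)⟩
  have hmem : ∀ᶠ k in l, ((x, b k), (a k, b k)) ∈ (s ×ˢ t) ×ˢ (s ×ˢ t) :=
    Eventually.of_forall fun k => ⟨⟨hx, hbt k⟩, has k, hbt k⟩
  have := Tendsto.comp ((hs.prod ht).uniformContinuousOn_of_continuous hf)
    (tendsto_inf.2 ⟨hclose, tendsto_principal.2 hmem⟩)
  rwa [uniformity_eq_comap_nhds_zero G, tendsto_comap_iff] at this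

theorem tendsto_zero_of_le_mul_add {δ ε : ℕ → ℝ} {L : ℝ} (hL0 : 0 ≤ L) (hL1 : L < 1)
    (hδ : ∀ k, 0 ≤ δ k) (hrec : ∀ k, δ (k + 1) ≤ L * δ k + ε k)
    (hε : Tendsto ε atTop (𝓝 0)) : Tendsto δ atTop (𝓝 0) := by
  refine tendsto_order.2 ⟨fun e he => Eventually.of_forall fun k => he.trans_le (hδ k),
    fun e he => ?_⟩
  obtain ⟨K, hK⟩ := eventually_atTop.1
    ((tendsto_order.1 hε).2 ((1 - L) * (e / 2)) (by nlinarith))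
  have hdecay : ∀ j, δ (K + j) ≤ L ^ j * δ K + e / 2 := by
    intro j
    induction j with
    | zero => simp only [add_zero, pow_zero, one_mul]; linarith
    | succ j ih =>
      calc δ (K + (j + 1)) ≤ L * δ (K + j) + ε (K + j) := hrec (K + j)
        _ ≤ L * (L ^ j * δ K + e / 2) + (1 - L) * (e / 2) := by
          gcongr
          exact (hK _ (Nat.le_add_right K j)).le
        _ = L ^ (j + 1) * δ K + e / 2 := by ring
  have hpow : Tendsto (fun j => L ^ j * δ K) atTop (𝓝 0) := by
    simpa using (tendsto_pow_atTop_nhds_zero_of_lt_one hL0 hL1).mul_const (δ K)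
  obtain ⟨J, hJ⟩ := eventually_atTop.1 ((tendsto_order.1 hpow).2 (e / 2) (half_pos he))
  refine eventually_atTop.2 ⟨K + J, fun k hk => ?_⟩
  obtain ⟨j, rfl⟩ := Nat.exists_eq_add_of_le (le_trans (Nat.le_add_right K J) hk)
  linarith [hdecay j, hJ j (by omega)]

/-- **Theorem 2: convergence of EnKI-MC (I).** -/
theorem enkiMC_convergence {m n N : ℕ}
    (A : Matrix (Fin m) (Fin n) ℝ) (d : Fin m → ℝ) (μ : ℝ) (hμ : 0 < μ)
    (α : ℕ → ℝ) (hα1 : ∀ k, 1 ≤ α k) (hαbdd : ∃ Mb : ℝ, ∀ k, α k ≤ Mb)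
    (hαlim : Tendsto α atTop (nhds 1))
    (u : ℕ → Fin N → Fin n → ℝ)
    (hiter : ∀ k, u (k + 1) = enkiStep A d μ (α k) (u k))
    (hconv : ∀ w : ℕ → Fin N → Fin n → ℝ,
      (∀ i, w 0 i ∈ Submodule.span ℝ (Set.range (u 0))) →
      (∀ k, w (k + 1) = enkiStep A d μ 1 (w k)) →
      ∃ wl : Fin N → Fin n → ℝ,
        Tendsto w atTop (nhds wl) ∧ ∀ i j, wl i = wl j)
    (hbdd : ∃ R : ℝ, ∀ k, ensNorm (u k) ≤ R)
    (hcontr : ∃ (k₀ : ℕ) (L : ℝ), 0 ≤ L ∧ L < 1 ∧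
      ∀ v : ℕ → Fin N → Fin n → ℝ, v k₀ = u k₀ →
        (∀ k, k₀ ≤ k → v (k + 1) = enkiStep A d μ 1 (v k)) →
        ∀ k, k₀ ≤ k →
          ensNorm (enkiStep A d μ 1 (u k) - enkiStep A d μ 1 (v k)) ≤
            L * ensNorm (u k - v k)) :
    (∀ k i, u k i ∈ Submodule.span ℝ (Set.range (u 0))) ∧
      ∃ ustar : Fin N → Fin n → ℝ,
        Tendsto u atTop (nhds ustar) ∧
        enkiStep A d μ 1 ustar = ustar ∧
        ∀ i j, ustar i = ustar j := by
  obtain ⟨Mb, hMb⟩ := hαbdd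
  obtain ⟨R, hR⟩ := hbdd
  obtain ⟨k₀, L, hL0, hL1, hLcontr⟩ := hcontr
  have hspan := mem_span_of_enkiStep_recursion A d hiter
  refine ⟨hspan, ?_⟩
  obtain ⟨ustar, hw, hcoll⟩ := hconv (fun j => (enkiStep A d μ 1)^[j] (u k₀)) (hspan k₀)
    fun j => Function.iterate_succ_apply' _ _ _
  set v : ℕ → Fin N → Fin n → ℝ := fun k => (enkiStep A d μ 1)^[k - k₀] (u k₀) with hv
  have hv_succ : ∀ k, k₀ ≤ k → v (k + 1) = enkiStep A d μ 1 (v k) := fun k hk => by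
    simp only [hv, Nat.sub_add_comm hk, Function.iterate_succ_apply']
  have hpert : Tendsto (fun k => enkiStep A d μ (α k) (u k) - enkiStep A d μ 1 (u k))
      atTop (𝓝 0) :=
    tendsto_sub_of_continuousOn_prod isCompact_Icc (isCompact_setOf_ensNorm_le R)
      ((continuousOn_enkiStep A d hμ).mono fun p hp => ⟨zero_le_one.trans hp.1.1, trivial⟩)
      hαlim (fun k => ⟨hα1 k, hMb k⟩) ⟨le_rfl, (hα1 0).trans (hMb 0)⟩ hR
  have hgap : Tendsto (fun j => u (j + k₀) - v (j + k₀)) atTop (𝓝 0) := by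
    refine tendsto_zero_iff_tendsto_ensNorm.2 (tendsto_zero_of_le_mul_add hL0 hL1
      (fun _ => Real.sqrt_nonneg _) (fun j => ?_)
      (tendsto_zero_iff_tendsto_ensNorm.1 (hpert.comp (tendsto_add_atTop_nat k₀))))
    have hk : k₀ ≤ j + k₀ := Nat.le_add_left k₀ j
    rw [Nat.add_right_comm, hiter, hv_succ _ hk, ← sub_add_sub_cancel _ (enkiStep A d μ 1 (u _)),
      add_comm]
    exact (ensNorm_add_le _ _).trans (add_le_add (hLcontr v (by simp [hv]) hv_succ _ hk) le_rfl)
  have hv_lim : Tendsto (fun j => v (j + k₀)) atTop (𝓝 ustar) := by simpa [hv] using hw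
  refine ⟨ustar, (tendsto_add_atTop_iff_nat k₀).1 ?_, enkiStep_eq_self_of_forall_eq A d 1 hcoll,
    hcoll⟩
  simpa using hv_lim.add hgap
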